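/- Let l₀,…,l₄ be ℂ-linearly independent linear forms in R. Let M be the 6×6 skew-symmetric matrix over R with rows (0, l₃, 0, 0, l₀, l₁), (−l₃, 0, 0, −l₀, 0, l₂), (0, 0, 0, −l₁, −l₂, 0), (0, l₀, l₁, 0, l₄, 0), (−l₀, 0, l₂, −l₄, 0, 0), (−l₁, −l₂, 0, 0, 0, 0), and let S be the 6×2 matrix over R with first column (l₂, −l₁, l₀, 0, 0, l₃) and second column (0, 0, l₄, l₂, −l₁, l₀). Then: (i) the kernel of the R-module homomorphism R⁶ → R², v ↦ Sᵀv, equals the image of the R-module homomorphism R⁶ → R⁶, v ↦ Mv; (ii) the ideal of R generated by the fifteen 2×2 minors of S equals the sub-Pfaffian ideal I₄(M). -/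

import Mathlib

open MvPolynomial Matrix

noncomputable section

/-- The polynomial ring `R = ℂ[x₀,…,x₄]`. -/
abbrev Rp : Type := MvPolynomial (Fin 5) ℂ

/-- The sub-Pfaffian `q_{αβ}(N)` of a `6 × 6` matrix: for `α < β` it is
`N_{ij}N_{kl} − N_{ik}N_{jl} + N_{il}N_{jk}` where `i < j < k < l` are the elements of
`{0,…,5} ∖ {α,β}`. -/
def subPf {A : Type*} [CommRing A] (N : Matrix (Fin 6) (Fin 6) A) (α β : Fin 6) : A :=
  match (List.finRange 6).filter (fun i => decide (i ≠ α) && decide (i ≠ β)) with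
  | [i, j, k, m] => N i j * N k m - N i k * N j m + N i m * N j k
  | _ => 0

/-- The Pfaffian of a `6 × 6` skew-symmetric matrix. -/
def pf {A : Type*} [CommRing A] (N : Matrix (Fin 6) (Fin 6) A) : A :=
  N 0 1 * subPf N 0 1 - N 0 2 * subPf N 0 2 + N 0 3 * subPf N 0 3
    - N 0 4 * subPf N 0 4 + N 0 5 * subPf N 0 5

/-- The sub-Pfaffian ideal `I₄(N)`, generated by the fifteen sub-Pfaffians. -/
def pfIdeal4 {A : Type*} [CommRing A] (N : Matrix (Fin 6) (Fin 6) A) : Ideal A :=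
  Ideal.span {x | ∃ α β : Fin 6, α < β ∧ x = subPf N α β}

@[simp] lemma cons_val_five' {α : Type*} (a : α) (u : Fin 5 → α) :
    Matrix.vecCons a u 5 = u 4 := rfl

lemma sub_aeval_mem (t : Set (Fin 5)) [DecidablePred (· ∈ t)] (p : Rp) :
    p - aeval (fun i => if i ∈ t then 0 else X i) p
      ∈ Ideal.span ((fun i => (X i : Rp)) '' t) := by
  set g : Fin 5 → Rp := fun i => if i ∈ t then 0 else X i with hg
  induction p using MvPolynomial.induction_on with
  | C a => simp
  | add p q hp hq =>
      have h : p + q - aeval g (p + q) = (p - aeval g p) + (q - aeval g q) := by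
        rw [map_add]; ring
      rw [h]; exact Ideal.add_mem _ hp hq
  | mul_X p i hp =>
      by_cases hi : i ∈ t
      · have h : p * X i - aeval g (p * X i) = p * X i := by
          rw [_root_.map_mul, aeval_X, hg]; simp [hi]
        rw [h]
        exact Ideal.mul_mem_left _ _
          (Ideal.subset_span (⟨i, hi, rfl⟩ : (X i : Rp) ∈ (fun i => (X i : Rp)) '' t))
      · have h : p * X i - aeval g (p * X i) = (p - aeval g p) * X i := by
          rw [_root_.map_mul, aeval_X, hg]; simp only [if_neg hi]; ring
        rw [h]; exact Ideal.mul_mem_right _ _ hp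

lemma mem_of_aeval_zero (t : Set (Fin 5)) [DecidablePred (· ∈ t)] (p : Rp)
    (h : aeval (fun i => if i ∈ t then 0 else (X i : Rp)) p = 0) :
    p ∈ Ideal.span ((fun i => (X i : Rp)) '' t) := by
  have := sub_aeval_mem t p
  rwa [h, sub_zero] at this

lemma degree_one_single (m : Fin 5 →₀ ℕ) (hm : m.degree = 1) :
    ∃ j, m = Finsupp.single j 1 := by
  have h1 : m.support.Nonempty := by
    rcases Finset.eq_empty_or_nonempty m.support with h | h
    · exfalso; rw [Finsupp.degree_apply, h] at hm; simp at hm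
    · exact h
  obtain ⟨j, hj⟩ := h1
  refine ⟨j, ?_⟩
  have hmj : 1 ≤ m j := Nat.one_le_iff_ne_zero.mpr (Finsupp.mem_support_iff.mp hj)
  have hle : m j ≤ m.degree := Finset.single_le_sum (f := fun i => m i) (fun _ _ => Nat.zero_le _) hj
  have hmj1 : m j = 1 := le_antisymm (hm ▸ hle) hmj
  ext i
  rcases eq_or_ne i j with rfl | hij
  · simp [hmj1]
  · have : m i = 0 := by
      by_contra hne
      have hi : i ∈ m.support := Finsupp.mem_support_iff.mpr hne
      have : m i + m j ≤ m.degree := by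
        rw [Finsupp.degree]
        have := Finset.add_sum_erase m.support (fun i => m i) hj
        calc m i + m j ≤ (∑ k ∈ m.support.erase j, m k) + m j := by
              gcongr
              exact Finset.single_le_sum (f := fun i => m i) (fun _ _ => Nat.zero_le _)
                (Finset.mem_erase.mpr ⟨hij, hi⟩)
          _ = ∑ k ∈ m.support, m k := by
              rw [add_comm, Finset.add_sum_erase m.support (fun i => m i) hj]
      omega
    simp [this, Finsupp.single_eq_of_ne hij]

lemma homog_one_decomp (p : Rp) (hp : p.IsHomogeneous 1) :
    p = ∑ j, C (coeff (Finsupp.single j 1) p) * X j := by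
  apply MvPolynomial.ext
  intro m
  rw [MvPolynomial.coeff_sum]
  simp only [coeff_C_mul, coeff_X']
  rcases eq_or_ne m.degree 1 with hd | hd
  · obtain ⟨j, rfl⟩ := degree_one_single m hd
    rw [Finset.sum_eq_single j]
    · simp
    · intro k _ hk
      rw [if_neg, mul_zero]
      exact fun h => hk ((Finsupp.single_left_inj (one_ne_zero (α := ℕ))).mp h)
    · simp
  · rw [hp.coeff_eq_zero (by simpa using hd)]
    symm
    apply Finset.sum_eq_zero
    intro k _
    rw [if_neg, mul_zero]
    intro h
    apply hd
    rw [← h]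
    rw [Finsupp.degree_apply, Finsupp.support_single_ne_zero _ (one_ne_zero)]
    simp

lemma Xsq_ne : (X 0 * X 0 - X 3 * X 4 : Rp) ≠ 0 := by
  intro h
  have h2 := congrArg (eval (![1,0,0,0,0] : Fin 5 → ℂ)) h
  simp [Matrix.cons_val', Matrix.cons_val_zero, Matrix.cons_val_one, Matrix.head_cons,
    Matrix.empty_val', Matrix.cons_val_fin_one] at h2

lemma L1X (v0 v1 v2 v3 v4 v5 : Rp)
    (h1 : X 2 * v0 - X 1 * v1 + X 0 * v2 + X 3 * v5 = 0)
    (h2 : X 4 * v2 + X 2 * v3 - X 1 * v4 + X 0 * v5 = 0) :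
    (∃ m n, v2 = X 1 * m + X 2 * n) ∧ (∃ p q, v5 = X 1 * p + X 2 * q) := by
  classical
  set t : Set (Fin 5) := {1, 2} with ht
  set g : Fin 5 → Rp := fun i => if i ∈ t then 0 else X i with hg
  have hg1 : aeval g (X 1 : Rp) = 0 := by rw [aeval_X]; simp [hg, ht]
  have hg2 : aeval g (X 2 : Rp) = 0 := by rw [aeval_X]; simp [hg, ht]
  have hg0 : aeval g (X 0 : Rp) = X 0 := by rw [aeval_X]; simp [hg, ht]
  have hg3 : aeval g (X 3 : Rp) = X 3 := by
    rw [aeval_X]; simp only [hg, ht]; rw [if_neg (by decide)]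
  have hg4 : aeval g (X 4 : Rp) = X 4 := by
    rw [aeval_X]; simp only [hg, ht]; rw [if_neg (by decide)]
  have e1 := congrArg (aeval g) h1
  have e2 := congrArg (aeval g) h2
  simp only [map_add, map_sub, _root_.map_mul, map_zero, hg0, hg1, hg2, hg3, hg4,
    zero_mul, sub_zero, zero_add, add_zero] at e1 e2
  -- e1 : X 0 * aeval g v2 + X 3 * aeval g v5 = 0
  -- e2 : X 4 * aeval g v2 + X 0 * aeval g v5 = 0
  have hz : (X 0 * X 0 - X 3 * X 4 : Rp) * aeval g v2 = 0 := by
    linear_combination X 0 * e1 - X 3 * e2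
  have hv2 : aeval g v2 = 0 := by
    rcases mul_eq_zero.mp hz with h | h
    · exact absurd h Xsq_ne
    · exact h
  have hv5 : aeval g v5 = 0 := by
    have h3 : (X 3 : Rp) * aeval g v5 = 0 := by
      rw [hv2] at e1; linear_combination e1
    rcases mul_eq_zero.mp h3 with h | h
    · exact absurd h (X_ne_zero _)
    · exact h
  have himg : ((fun i => (X i : Rp)) '' t) = {X 1, X 2} := by
    rw [ht]; simp [Set.image_insert_eq]
  constructor
  · have hm := mem_of_aeval_zero t v2 hv2
    rw [himg] at hm
    obtain ⟨u, w, huw⟩ := Ideal.mem_span_pair.mp hm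
    exact ⟨u, w, by linear_combination -huw⟩
  · have hm := mem_of_aeval_zero t v5 hv5
    rw [himg] at hm
    obtain ⟨u, w, huw⟩ := Ideal.mem_span_pair.mp hm
    exact ⟨u, w, by linear_combination -huw⟩

lemma L2X (f : Rp) (h : (X 1 : Rp) ∣ X 2 * f) : (X 1 : Rp) ∣ f := by
  classical
  obtain ⟨u, hu⟩ := h
  set t : Set (Fin 5) := {1} with ht
  set g : Fin 5 → Rp := fun i => if i ∈ t then 0 else X i with hg
  have hg1 : aeval g (X 1 : Rp) = 0 := by rw [aeval_X]; simp [hg, ht]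
  have hg2 : aeval g (X 2 : Rp) = X 2 := by
    rw [aeval_X]; simp only [hg, ht]; rw [if_neg (by decide)]
  have e := congrArg (aeval g) hu
  simp only [_root_.map_mul, hg1, hg2, zero_mul] at e
  have hf : aeval g f = 0 := by
    rcases mul_eq_zero.mp e with h | h
    · exact absurd h (X_ne_zero _)
    · exact h
  have hm := mem_of_aeval_zero t f hf
  have himg : ((fun i => (X i : Rp)) '' t) = {X 1} := by rw [ht]; simp
  rw [himg] at hm
  exact Ideal.mem_span_singleton.mp hm

lemma subPf_01 {A : Type*} [CommRing A] (N : Matrix (Fin 6) (Fin 6) A) :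
    subPf N 0 1 = N 2 3 * N 4 5 - N 2 4 * N 3 5 + N 2 5 * N 3 4 := rfl

lemma subPf_02 {A : Type*} [CommRing A] (N : Matrix (Fin 6) (Fin 6) A) :
    subPf N 0 2 = N 1 3 * N 4 5 - N 1 4 * N 3 5 + N 1 5 * N 3 4 := rfl

lemma subPf_03 {A : Type*} [CommRing A] (N : Matrix (Fin 6) (Fin 6) A) :
    subPf N 0 3 = N 1 2 * N 4 5 - N 1 4 * N 2 5 + N 1 5 * N 2 4 := rfl

lemma subPf_04 {A : Type*} [CommRing A] (N : Matrix (Fin 6) (Fin 6) A) :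
    subPf N 0 4 = N 1 2 * N 3 5 - N 1 3 * N 2 5 + N 1 5 * N 2 3 := rfl

lemma subPf_05 {A : Type*} [CommRing A] (N : Matrix (Fin 6) (Fin 6) A) :
    subPf N 0 5 = N 1 2 * N 3 4 - N 1 3 * N 2 4 + N 1 4 * N 2 3 := rfl

lemma subPf_12 {A : Type*} [CommRing A] (N : Matrix (Fin 6) (Fin 6) A) :
    subPf N 1 2 = N 0 3 * N 4 5 - N 0 4 * N 3 5 + N 0 5 * N 3 4 := rfl

lemma subPf_13 {A : Type*} [CommRing A] (N : Matrix (Fin 6) (Fin 6) A) :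
    subPf N 1 3 = N 0 2 * N 4 5 - N 0 4 * N 2 5 + N 0 5 * N 2 4 := rfl

lemma subPf_14 {A : Type*} [CommRing A] (N : Matrix (Fin 6) (Fin 6) A) :
    subPf N 1 4 = N 0 2 * N 3 5 - N 0 3 * N 2 5 + N 0 5 * N 2 3 := rfl

lemma subPf_15 {A : Type*} [CommRing A] (N : Matrix (Fin 6) (Fin 6) A) :
    subPf N 1 5 = N 0 2 * N 3 4 - N 0 3 * N 2 4 + N 0 4 * N 2 3 := rfl

lemma subPf_23 {A : Type*} [CommRing A] (N : Matrix (Fin 6) (Fin 6) A) :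
    subPf N 2 3 = N 0 1 * N 4 5 - N 0 4 * N 1 5 + N 0 5 * N 1 4 := rfl

lemma subPf_24 {A : Type*} [CommRing A] (N : Matrix (Fin 6) (Fin 6) A) :
    subPf N 2 4 = N 0 1 * N 3 5 - N 0 3 * N 1 5 + N 0 5 * N 1 3 := rfl

lemma subPf_25 {A : Type*} [CommRing A] (N : Matrix (Fin 6) (Fin 6) A) :
    subPf N 2 5 = N 0 1 * N 3 4 - N 0 3 * N 1 4 + N 0 4 * N 1 3 := rfl

lemma subPf_34 {A : Type*} [CommRing A] (N : Matrix (Fin 6) (Fin 6) A) :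
    subPf N 3 4 = N 0 1 * N 2 5 - N 0 2 * N 1 5 + N 0 5 * N 1 2 := rfl

lemma subPf_35 {A : Type*} [CommRing A] (N : Matrix (Fin 6) (Fin 6) A) :
    subPf N 3 5 = N 0 1 * N 2 4 - N 0 2 * N 1 4 + N 0 4 * N 1 2 := rfl

lemma subPf_45 {A : Type*} [CommRing A] (N : Matrix (Fin 6) (Fin 6) A) :
    subPf N 4 5 = N 0 1 * N 2 3 - N 0 2 * N 1 3 + N 0 3 * N 1 2 := rfl

lemma exists_equiv (l : Fin 5 → Rp) (hl : ∀ i, (l i).IsHomogeneous 1)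
    (hind : LinearIndependent ℂ l) :
    ∃ φ ψ : Rp →ₐ[ℂ] Rp, (∀ i, φ (X i) = l i) ∧ (∀ p, φ (ψ p) = p) ∧ (∀ p, ψ (φ p) = p) := by
  classical
  set A : Matrix (Fin 5) (Fin 5) ℂ := fun i j => coeff (Finsupp.single j 1) (l i) with hAdef
  have hA : ∀ i, l i = ∑ j, C (A i j) * X j := fun i => homog_one_decomp (l i) (hl i)
  set W : Submodule ℂ Rp := Submodule.span ℂ (Set.range (fun i : Fin 5 => (X i : Rp))) with hW
  have hlW : ∀ i, l i ∈ W := by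
    intro i
    rw [hA i]
    refine Submodule.sum_mem _ fun j _ => ?_
    rw [← smul_eq_C_mul]
    exact Submodule.smul_mem _ _ (Submodule.subset_span ⟨j, rfl⟩)
  have hrank : Module.finrank ℂ W = 5 := by
    rw [hW, finrank_span_eq_card (MvPolynomial.linearIndependent_X (σ := Fin 5) (R := ℂ))]
    simp
  set l' : Fin 5 → W := fun i => ⟨l i, hlW i⟩ with hl'
  have hl'ind : LinearIndependent ℂ l' := by
    apply LinearIndependent.of_comp W.subtype
    convert hind
    rfl
  let b : Module.Basis (Fin 5) ℂ W := basisOfLinearIndependentOfCardEqFinrank hl'ind (by simp [hrank])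
  have hXc : ∀ i : Fin 5, ∃ c : Fin 5 → ℂ, ∑ j, c j • l j = X i := by
    intro i
    have hx : (⟨X i, Submodule.subset_span ⟨i, rfl⟩⟩ : W)
        ∈ Submodule.span ℂ (Set.range l') := by
      have hb : ⇑b = l' := coe_basisOfLinearIndependentOfCardEqFinrank _ _
      rw [← hb, b.span_eq]; trivial
    obtain ⟨c, hc⟩ := (Submodule.mem_span_range_iff_exists_fun ℂ).mp hx
    refine ⟨c, ?_⟩
    have := congrArg (Subtype.val) hc
    simpa using this
  choose Cm hCm using hXc
  have hACm : ∀ i k, (∑ j, A i j * Cm j k) = if i = k then 1 else 0 := by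
    intro i k
    have h1 : l i = ∑ k, (∑ j, A i j * Cm j k) • l k := by
      calc l i = ∑ j, A i j • X j := by
              rw [hA i]; exact Finset.sum_congr rfl fun j _ => (smul_eq_C_mul _ _).symm
        _ = ∑ j, A i j • (∑ k, Cm j k • l k) := by
              refine Finset.sum_congr rfl fun j _ => ?_; rw [hCm j]
        _ = ∑ j, ∑ k, (A i j * Cm j k) • l k := by
              refine Finset.sum_congr rfl fun j _ => ?_
              rw [Finset.smul_sum]
              exact Finset.sum_congr rfl fun k _ => (smul_smul _ _ _)
        _ = ∑ k, ∑ j, (A i j * Cm j k) • l k := Finset.sum_comm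
        _ = ∑ k, (∑ j, A i j * Cm j k) • l k := by
              refine Finset.sum_congr rfl fun k _ => ?_
              rw [Finset.sum_smul]
    have key : ∑ k, ((∑ j, A i j * Cm j k) - if i = k then 1 else 0) • l k = 0 := by
      have h2 : l i = ∑ k, (if i = k then (1:ℂ) else 0) • l k := by simp
      calc ∑ k, ((∑ j, A i j * Cm j k) - if i = k then 1 else 0) • l k
          = (∑ k, (∑ j, A i j * Cm j k) • l k) - ∑ k, (if i = k then (1:ℂ) else 0) • l k := by
            rw [← Finset.sum_sub_distrib]
            exact Finset.sum_congr rfl fun k _ => (sub_smul _ _ _)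
        _ = 0 := by rw [← h1, ← h2, sub_self]
    have := Fintype.linearIndependent_iff.mp hind _ key k
    exact sub_eq_zero.mp this
  refine ⟨aeval l, aeval (fun i => ∑ j, C (Cm i j) * X j), fun i => aeval_X _ _, ?_, ?_⟩
  · intro p
    have : (aeval l).comp (aeval (fun i => ∑ j, C (Cm i j) * X j)) = AlgHom.id ℂ Rp := by
      apply MvPolynomial.algHom_ext
      intro i
      rw [AlgHom.comp_apply, aeval_X, map_sum, AlgHom.id_apply]
      refine Eq.trans (Finset.sum_congr rfl fun j _ => ?_) (hCm i)
      rw [_root_.map_mul, aeval_X, aeval_C, MvPolynomial.algebraMap_eq, ← smul_eq_C_mul]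
    exact congrFun (congrArg DFunLike.coe this) p
  · intro p
    have : ((aeval (fun i => ∑ j, C (Cm i j) * X j)).comp (aeval l)) = AlgHom.id ℂ Rp := by
      apply MvPolynomial.algHom_ext
      intro i
      simp only [AlgHom.comp_apply, aeval_X, AlgHom.id_apply]
      rw [hA i, map_sum]
      have step : ∀ j, (aeval (fun i => ∑ j, C (Cm i j) * X j)) (C (A i j) * X j)
          = ∑ k, C (A i j * Cm j k) * X k := by
        intro j
        rw [_root_.map_mul, aeval_X, aeval_C, MvPolynomial.algebraMap_eq, Finset.mul_sum]
        exact Finset.sum_congr rfl fun k _ => by rw [C_mul, mul_assoc]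
      rw [Finset.sum_congr rfl fun j _ => step j, Finset.sum_comm]
      have : ∀ k, (∑ j, C (A i j * Cm j k) * X k) = C (∑ j, A i j * Cm j k) * X k := by
        intro k
        rw [← Finset.sum_mul, map_sum]
      rw [Finset.sum_congr rfl fun k _ => this k]
      simp only [hACm]
      simp [apply_ite C]
    exact congrFun (congrArg DFunLike.coe this) p

set_option maxHeartbeats 1000000 in
/-- Proposition 1.2, case (a). -/
theorem type_a_syzygy_and_minors
    (l : Fin 5 → Rp) (hl : ∀ i, (l i).IsHomogeneous 1) (hind : LinearIndependent ℂ l)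
    (M : Matrix (Fin 6) (Fin 6) Rp)
    (hM : M = !![0, l 3, 0, 0, l 0, l 1;
                 -l 3, 0, 0, -l 0, 0, l 2;
                 0, 0, 0, -l 1, -l 2, 0;
                 0, l 0, l 1, 0, l 4, 0;
                 -l 0, 0, l 2, -l 4, 0, 0;
                 -l 1, -l 2, 0, 0, 0, 0])
    (S : Matrix (Fin 6) (Fin 2) Rp)
    (hS : S = !![l 2, 0;
                 -l 1, 0;
                 l 0, l 4;
                 0, l 2;
                 0, -l 1;
                 l 3, l 0]) :
    LinearMap.ker (Matrix.mulVecLin Sᵀ) = LinearMap.range (Matrix.mulVecLin M) ∧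
    Ideal.span {x | ∃ i j : Fin 6, i < j ∧ x = S i 0 * S j 1 - S i 1 * S j 0}
      = pfIdeal4 M := by
  obtain ⟨φ, ψ, hφX, hφψ, hψφ⟩ := exists_equiv l hl hind
  have hψl : ∀ i, ψ (l i) = X i := fun i => by rw [← hφX i, hψφ]
  have hb : l 1 ≠ 0 := hind.ne_zero 1
  have L2 : ∀ f : Rp, l 1 ∣ l 2 * f → l 1 ∣ f := by
    rintro f ⟨u, hu⟩
    have h' : (X 1 : Rp) ∣ X 2 * ψ f := by
      refine ⟨ψ u, ?_⟩
      have h2 := congrArg ψ hu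
      simpa only [_root_.map_mul, hψl] using h2
    obtain ⟨gq, hgq⟩ := L2X (ψ f) h'
    refine ⟨φ gq, ?_⟩
    have h3 := congrArg φ hgq
    rwa [hφψ, _root_.map_mul, hφX] at h3
  constructor
  · apply le_antisymm
    · -- ker ⊆ range
      intro v hv
      rw [LinearMap.mem_ker, mulVecLin_apply] at hv
      have h1 := congrFun hv 0
      have h2 := congrFun hv 1
      simp [hS, mulVec, dotProduct, Fin.sum_univ_six, transpose_apply, Pi.zero_apply,
        Matrix.cons_val', Matrix.cons_val_zero, Matrix.cons_val_one, Matrix.head_cons, Matrix.empty_val', Matrix.cons_val_fin_one, Matrix.head_fin_const, cons_val_five', Matrix.vecHead, Matrix.vecTail] at h1 h2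
      have e1 : X 2 * ψ (v 0) - X 1 * ψ (v 1) + X 0 * ψ (v 2) + X 3 * ψ (v 5) = 0 := by
        have h := congrArg ψ h1
        simp only [map_add, map_sub, map_neg, _root_.map_mul, map_zero, hψl, neg_mul,
          zero_mul, mul_zero, add_zero, zero_add] at h
        linear_combination h
      have e2 : X 4 * ψ (v 2) + X 2 * ψ (v 3) - X 1 * ψ (v 4) + X 0 * ψ (v 5) = 0 := by
        have h := congrArg ψ h2
        simp only [map_add, map_sub, map_neg, _root_.map_mul, map_zero, hψl, neg_mul,
          zero_mul, mul_zero, add_zero, zero_add] at h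
        linear_combination h
      obtain ⟨⟨m0, n0, hv2x⟩, ⟨p0, q0, hv5x⟩⟩ := L1X _ _ _ _ _ _ e1 e2
      have hv2 : v 2 = l 1 * φ m0 + l 2 * φ n0 := by
        have h := congrArg φ hv2x
        rwa [hφψ, map_add, _root_.map_mul, _root_.map_mul, hφX, hφX] at h
      have hv5 : v 5 = l 1 * φ p0 + l 2 * φ q0 := by
        have h := congrArg φ hv5x
        rwa [hφψ, map_add, _root_.map_mul, _root_.map_mul, hφX, hφX] at h
      have key1 : l 2 * (v 0 + l 3 * φ q0 + l 0 * φ n0)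
          = l 1 * (v 1 - l 3 * φ p0 - l 0 * φ m0) := by
        linear_combination h1 - l 0 * hv2 - l 3 * hv5
      have key2 : l 2 * (v 3 + l 0 * φ q0 + l 4 * φ n0)
          = l 1 * (v 4 - l 0 * φ p0 - l 4 * φ m0) := by
        linear_combination h2 - l 4 * hv2 - l 0 * hv5
      obtain ⟨w5, hw5⟩ := L2 _ ⟨_, key1⟩
      obtain ⟨w2, hw2⟩ := L2 _ ⟨_, key2⟩
      have hw5c : l 2 * w5 = v 1 - l 3 * φ p0 - l 0 * φ m0 :=
        mul_left_cancel₀ hb (by linear_combination key1 - l 2 * hw5)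
      have hw2c : l 2 * w2 = v 4 - l 0 * φ p0 - l 4 * φ m0 :=
        mul_left_cancel₀ hb (by linear_combination key2 - l 2 * hw2)
      refine ⟨![-(φ p0), -(φ q0), w2, -(φ m0), -(φ n0), w5], ?_⟩
      rw [mulVecLin_apply]
      have c0 : (M *ᵥ ![-(φ p0), -(φ q0), w2, -(φ m0), -(φ n0), w5]) 0 = v 0 := by
        simp [hM, mulVec, dotProduct, Fin.sum_univ_six, Matrix.cons_val', Matrix.cons_val_zero, Matrix.cons_val_one, Matrix.head_cons, Matrix.empty_val', Matrix.cons_val_fin_one, Matrix.head_fin_const, cons_val_five', Matrix.vecHead, Matrix.vecTail]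
        linear_combination -hw5
      have c1 : (M *ᵥ ![-(φ p0), -(φ q0), w2, -(φ m0), -(φ n0), w5]) 1 = v 1 := by
        simp [hM, mulVec, dotProduct, Fin.sum_univ_six, Matrix.cons_val', Matrix.cons_val_zero, Matrix.cons_val_one, Matrix.head_cons, Matrix.empty_val', Matrix.cons_val_fin_one, Matrix.head_fin_const, cons_val_five', Matrix.vecHead, Matrix.vecTail]
        linear_combination hw5c
      have c2 : (M *ᵥ ![-(φ p0), -(φ q0), w2, -(φ m0), -(φ n0), w5]) 2 = v 2 := by
        simp [hM, mulVec, dotProduct, Fin.sum_univ_six, Matrix.cons_val', Matrix.cons_val_zero, Matrix.cons_val_one, Matrix.head_cons, Matrix.empty_val', Matrix.cons_val_fin_one, Matrix.head_fin_const, cons_val_five', Matrix.vecHead, Matrix.vecTail]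
        linear_combination -hv2
      have c3 : (M *ᵥ ![-(φ p0), -(φ q0), w2, -(φ m0), -(φ n0), w5]) 3 = v 3 := by
        simp [hM, mulVec, dotProduct, Fin.sum_univ_six, Matrix.cons_val', Matrix.cons_val_zero, Matrix.cons_val_one, Matrix.head_cons, Matrix.empty_val', Matrix.cons_val_fin_one, Matrix.head_fin_const, cons_val_five', Matrix.vecHead, Matrix.vecTail]
        linear_combination -hw2
      have c4 : (M *ᵥ ![-(φ p0), -(φ q0), w2, -(φ m0), -(φ n0), w5]) 4 = v 4 := by
        simp [hM, mulVec, dotProduct, Fin.sum_univ_six, Matrix.cons_val', Matrix.cons_val_zero, Matrix.cons_val_one, Matrix.head_cons, Matrix.empty_val', Matrix.cons_val_fin_one, Matrix.head_fin_const, cons_val_five', Matrix.vecHead, Matrix.vecTail]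
        linear_combination hw2c
      have c5 : (M *ᵥ ![-(φ p0), -(φ q0), w2, -(φ m0), -(φ n0), w5]) 5 = v 5 := by
        simp [hM, mulVec, dotProduct, Fin.sum_univ_six, Matrix.cons_val', Matrix.cons_val_zero, Matrix.cons_val_one, Matrix.head_cons, Matrix.empty_val', Matrix.cons_val_fin_one, Matrix.head_fin_const, cons_val_five', Matrix.vecHead, Matrix.vecTail]
        linear_combination -hv5
      funext k
      fin_cases k
      · exact c0
      · exact c1
      · exact c2
      · exact c3
      · exact c4
      · exact c5
    · -- range ⊆ ker
      rintro x ⟨w, rfl⟩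
      rw [LinearMap.mem_ker, mulVecLin_apply, mulVecLin_apply]
      have c0 : (Sᵀ *ᵥ (M *ᵥ w)) 0 = 0 := by
        simp [hS, hM, mulVec, dotProduct, Fin.sum_univ_six, transpose_apply, Matrix.cons_val', Matrix.cons_val_zero, Matrix.cons_val_one, Matrix.head_cons, Matrix.empty_val', Matrix.cons_val_fin_one, Matrix.head_fin_const, cons_val_five', Matrix.vecHead, Matrix.vecTail]
        try ring
      have c1 : (Sᵀ *ᵥ (M *ᵥ w)) 1 = 0 := by
        simp [hS, hM, mulVec, dotProduct, Fin.sum_univ_six, transpose_apply, Matrix.cons_val', Matrix.cons_val_zero, Matrix.cons_val_one, Matrix.head_cons, Matrix.empty_val', Matrix.cons_val_fin_one, Matrix.head_fin_const, cons_val_five', Matrix.vecHead, Matrix.vecTail]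
        try ring
      funext k
      fin_cases k
      · exact c0
      · exact c1
  · have gen : ∀ a b : Fin 6, a < b → subPf M a b ∈ pfIdeal4 M :=
      fun a b h => Ideal.subset_span ⟨a, b, h, rfl⟩
    set J : Ideal Rp :=
      Ideal.span {x | ∃ i j : Fin 6, i < j ∧ x = S i 0 * S j 1 - S i 1 * S j 0} with hJ
    have gen' : ∀ i j : Fin 6, i < j →
        S i 0 * S j 1 - S i 1 * S j 0 ∈ J :=
      fun i j h => Ideal.subset_span ⟨i, j, h, rfl⟩
    have eq01 : S 0 0 * S 1 1 - S 0 1 * S 1 0 = subPf M 0 1 := by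
      rw [hS, hM, subPf_01]
      simp [Matrix.cons_val', Matrix.cons_val_zero, Matrix.cons_val_one, Matrix.head_cons, Matrix.empty_val', Matrix.cons_val_fin_one, Matrix.head_fin_const, cons_val_five', Matrix.vecHead, Matrix.vecTail]
      try ring
    have eq02 : S 0 0 * S 2 1 - S 0 1 * S 2 0 = subPf M 0 2 := by
      rw [hS, hM, subPf_02]
      simp [Matrix.cons_val', Matrix.cons_val_zero, Matrix.cons_val_one, Matrix.head_cons, Matrix.empty_val', Matrix.cons_val_fin_one, Matrix.head_fin_const, cons_val_five', Matrix.vecHead, Matrix.vecTail]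
      try ring
    have eq03 : S 0 0 * S 3 1 - S 0 1 * S 3 0 = -subPf M 0 3 := by
      rw [hS, hM, subPf_03]
      simp [Matrix.cons_val', Matrix.cons_val_zero, Matrix.cons_val_one, Matrix.head_cons, Matrix.empty_val', Matrix.cons_val_fin_one, Matrix.head_fin_const, cons_val_five', Matrix.vecHead, Matrix.vecTail]
      try ring
    have eq04 : S 0 0 * S 4 1 - S 0 1 * S 4 0 = subPf M 0 4 := by
      rw [hS, hM, subPf_04]
      simp [Matrix.cons_val', Matrix.cons_val_zero, Matrix.cons_val_one, Matrix.head_cons, Matrix.empty_val', Matrix.cons_val_fin_one, Matrix.head_fin_const, cons_val_five', Matrix.vecHead, Matrix.vecTail]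
      try ring
    have eq05 : S 0 0 * S 5 1 - S 0 1 * S 5 0 = -subPf M 0 5 := by
      rw [hS, hM, subPf_05]
      simp [Matrix.cons_val', Matrix.cons_val_zero, Matrix.cons_val_one, Matrix.head_cons, Matrix.empty_val', Matrix.cons_val_fin_one, Matrix.head_fin_const, cons_val_five', Matrix.vecHead, Matrix.vecTail]
      try ring
    have eq12 : S 1 0 * S 2 1 - S 1 1 * S 2 0 = -subPf M 1 2 := by
      rw [hS, hM, subPf_12]
      simp [Matrix.cons_val', Matrix.cons_val_zero, Matrix.cons_val_one, Matrix.head_cons, Matrix.empty_val', Matrix.cons_val_fin_one, Matrix.head_fin_const, cons_val_five', Matrix.vecHead, Matrix.vecTail]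
      try ring
    have eq13 : S 1 0 * S 3 1 - S 1 1 * S 3 0 = subPf M 1 3 := by
      rw [hS, hM, subPf_13]
      simp [Matrix.cons_val', Matrix.cons_val_zero, Matrix.cons_val_one, Matrix.head_cons, Matrix.empty_val', Matrix.cons_val_fin_one, Matrix.head_fin_const, cons_val_five', Matrix.vecHead, Matrix.vecTail]
      try ring
    have eq14 : S 1 0 * S 4 1 - S 1 1 * S 4 0 = -subPf M 1 4 := by
      rw [hS, hM, subPf_14]
      simp [Matrix.cons_val', Matrix.cons_val_zero, Matrix.cons_val_one, Matrix.head_cons, Matrix.empty_val', Matrix.cons_val_fin_one, Matrix.head_fin_const, cons_val_five', Matrix.vecHead, Matrix.vecTail]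
      try ring
    have eq15 : S 1 0 * S 5 1 - S 1 1 * S 5 0 = subPf M 1 5 := by
      rw [hS, hM, subPf_15]
      simp [Matrix.cons_val', Matrix.cons_val_zero, Matrix.cons_val_one, Matrix.head_cons, Matrix.empty_val', Matrix.cons_val_fin_one, Matrix.head_fin_const, cons_val_five', Matrix.vecHead, Matrix.vecTail]
      try ring
    have eq23 : S 2 0 * S 3 1 - S 2 1 * S 3 0 = -subPf M 2 3 := by
      rw [hS, hM, subPf_23]
      simp [Matrix.cons_val', Matrix.cons_val_zero, Matrix.cons_val_one, Matrix.head_cons, Matrix.empty_val', Matrix.cons_val_fin_one, Matrix.head_fin_const, cons_val_five', Matrix.vecHead, Matrix.vecTail]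
      try ring
    have eq24 : S 2 0 * S 4 1 - S 2 1 * S 4 0 = subPf M 2 4 := by
      rw [hS, hM, subPf_24]
      simp [Matrix.cons_val', Matrix.cons_val_zero, Matrix.cons_val_one, Matrix.head_cons, Matrix.empty_val', Matrix.cons_val_fin_one, Matrix.head_fin_const, cons_val_five', Matrix.vecHead, Matrix.vecTail]
      try ring
    have eq25 : S 2 0 * S 5 1 - S 2 1 * S 5 0 = -subPf M 2 5 := by
      rw [hS, hM, subPf_25]
      simp [Matrix.cons_val', Matrix.cons_val_zero, Matrix.cons_val_one, Matrix.head_cons, Matrix.empty_val', Matrix.cons_val_fin_one, Matrix.head_fin_const, cons_val_five', Matrix.vecHead, Matrix.vecTail]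
      try ring
    have eq34 : S 3 0 * S 4 1 - S 3 1 * S 4 0 = subPf M 3 4 := by
      rw [hS, hM, subPf_34]
      simp [Matrix.cons_val', Matrix.cons_val_zero, Matrix.cons_val_one, Matrix.head_cons, Matrix.empty_val', Matrix.cons_val_fin_one, Matrix.head_fin_const, cons_val_five', Matrix.vecHead, Matrix.vecTail]
      try ring
    have eq35 : S 3 0 * S 5 1 - S 3 1 * S 5 0 = subPf M 3 5 := by
      rw [hS, hM, subPf_35]
      simp [Matrix.cons_val', Matrix.cons_val_zero, Matrix.cons_val_one, Matrix.head_cons, Matrix.empty_val', Matrix.cons_val_fin_one, Matrix.head_fin_const, cons_val_five', Matrix.vecHead, Matrix.vecTail]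
      try ring
    have eq45 : S 4 0 * S 5 1 - S 4 1 * S 5 0 = -subPf M 4 5 := by
      rw [hS, hM, subPf_45]
      simp [Matrix.cons_val', Matrix.cons_val_zero, Matrix.cons_val_one, Matrix.head_cons, Matrix.empty_val', Matrix.cons_val_fin_one, Matrix.head_fin_const, cons_val_five', Matrix.vecHead, Matrix.vecTail]
      try ring
    have memA01 : S 0 0 * S 1 1 - S 0 1 * S 1 0 ∈ pfIdeal4 M := by
      rw [eq01]; exact gen 0 1 (by decide)
    have memA02 : S 0 0 * S 2 1 - S 0 1 * S 2 0 ∈ pfIdeal4 M := by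
      rw [eq02]; exact gen 0 2 (by decide)
    have memA03 : S 0 0 * S 3 1 - S 0 1 * S 3 0 ∈ pfIdeal4 M := by
      rw [eq03]; exact (pfIdeal4 M).neg_mem (gen 0 3 (by decide))
    have memA04 : S 0 0 * S 4 1 - S 0 1 * S 4 0 ∈ pfIdeal4 M := by
      rw [eq04]; exact gen 0 4 (by decide)
    have memA05 : S 0 0 * S 5 1 - S 0 1 * S 5 0 ∈ pfIdeal4 M := by
      rw [eq05]; exact (pfIdeal4 M).neg_mem (gen 0 5 (by decide))
    have memA12 : S 1 0 * S 2 1 - S 1 1 * S 2 0 ∈ pfIdeal4 M := by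
      rw [eq12]; exact (pfIdeal4 M).neg_mem (gen 1 2 (by decide))
    have memA13 : S 1 0 * S 3 1 - S 1 1 * S 3 0 ∈ pfIdeal4 M := by
      rw [eq13]; exact gen 1 3 (by decide)
    have memA14 : S 1 0 * S 4 1 - S 1 1 * S 4 0 ∈ pfIdeal4 M := by
      rw [eq14]; exact (pfIdeal4 M).neg_mem (gen 1 4 (by decide))
    have memA15 : S 1 0 * S 5 1 - S 1 1 * S 5 0 ∈ pfIdeal4 M := by
      rw [eq15]; exact gen 1 5 (by decide)
    have memA23 : S 2 0 * S 3 1 - S 2 1 * S 3 0 ∈ pfIdeal4 M := by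
      rw [eq23]; exact (pfIdeal4 M).neg_mem (gen 2 3 (by decide))
    have memA24 : S 2 0 * S 4 1 - S 2 1 * S 4 0 ∈ pfIdeal4 M := by
      rw [eq24]; exact gen 2 4 (by decide)
    have memA25 : S 2 0 * S 5 1 - S 2 1 * S 5 0 ∈ pfIdeal4 M := by
      rw [eq25]; exact (pfIdeal4 M).neg_mem (gen 2 5 (by decide))
    have memA34 : S 3 0 * S 4 1 - S 3 1 * S 4 0 ∈ pfIdeal4 M := by
      rw [eq34]; exact gen 3 4 (by decide)
    have memA35 : S 3 0 * S 5 1 - S 3 1 * S 5 0 ∈ pfIdeal4 M := by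
      rw [eq35]; exact gen 3 5 (by decide)
    have memA45 : S 4 0 * S 5 1 - S 4 1 * S 5 0 ∈ pfIdeal4 M := by
      rw [eq45]; exact (pfIdeal4 M).neg_mem (gen 4 5 (by decide))
    have memB01 : subPf M 0 1 ∈ J := by
      rw [← eq01]; exact gen' 0 1 (by decide)
    have memB02 : subPf M 0 2 ∈ J := by
      rw [← eq02]; exact gen' 0 2 (by decide)
    have memB03 : subPf M 0 3 ∈ J := by
      have h : subPf M 0 3 = -(S 0 0 * S 3 1 - S 0 1 * S 3 0) := by
        rw [eq03]; ring
      rw [h]; exact J.neg_mem (gen' 0 3 (by decide))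
    have memB04 : subPf M 0 4 ∈ J := by
      rw [← eq04]; exact gen' 0 4 (by decide)
    have memB05 : subPf M 0 5 ∈ J := by
      have h : subPf M 0 5 = -(S 0 0 * S 5 1 - S 0 1 * S 5 0) := by
        rw [eq05]; ring
      rw [h]; exact J.neg_mem (gen' 0 5 (by decide))
    have memB12 : subPf M 1 2 ∈ J := by
      have h : subPf M 1 2 = -(S 1 0 * S 2 1 - S 1 1 * S 2 0) := by
        rw [eq12]; ring
      rw [h]; exact J.neg_mem (gen' 1 2 (by decide))
    have memB13 : subPf M 1 3 ∈ J := by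
      rw [← eq13]; exact gen' 1 3 (by decide)
    have memB14 : subPf M 1 4 ∈ J := by
      have h : subPf M 1 4 = -(S 1 0 * S 4 1 - S 1 1 * S 4 0) := by
        rw [eq14]; ring
      rw [h]; exact J.neg_mem (gen' 1 4 (by decide))
    have memB15 : subPf M 1 5 ∈ J := by
      rw [← eq15]; exact gen' 1 5 (by decide)
    have memB23 : subPf M 2 3 ∈ J := by
      have h : subPf M 2 3 = -(S 2 0 * S 3 1 - S 2 1 * S 3 0) := by
        rw [eq23]; ring
      rw [h]; exact J.neg_mem (gen' 2 3 (by decide))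
    have memB24 : subPf M 2 4 ∈ J := by
      rw [← eq24]; exact gen' 2 4 (by decide)
    have memB25 : subPf M 2 5 ∈ J := by
      have h : subPf M 2 5 = -(S 2 0 * S 5 1 - S 2 1 * S 5 0) := by
        rw [eq25]; ring
      rw [h]; exact J.neg_mem (gen' 2 5 (by decide))
    have memB34 : subPf M 3 4 ∈ J := by
      rw [← eq34]; exact gen' 3 4 (by decide)
    have memB35 : subPf M 3 5 ∈ J := by
      rw [← eq35]; exact gen' 3 5 (by decide)
    have memB45 : subPf M 4 5 ∈ J := by
      have h : subPf M 4 5 = -(S 4 0 * S 5 1 - S 4 1 * S 5 0) := by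
        rw [eq45]; ring
      rw [h]; exact J.neg_mem (gen' 4 5 (by decide))
    apply le_antisymm
    · rw [hJ, Ideal.span_le]
      rintro x ⟨i, j, hij, rfl⟩
      fin_cases i <;> fin_cases j <;>
        first | exact absurd hij (by decide) | exact memA01 | exact memA02 | exact memA03 | exact memA04 | exact memA05 | exact memA12 | exact memA13 | exact memA14 | exact memA15 | exact memA23 | exact memA24 | exact memA25 | exact memA34 | exact memA35 | exact memA45
    · have hpf : pfIdeal4 M
          = Ideal.span {x | ∃ α β : Fin 6, α < β ∧ x = subPf M α β} := rfl
      rw [hpf, Ideal.span_le]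
      rintro x ⟨i, j, hij, rfl⟩
      fin_cases i <;> fin_cases j <;> simp only [Fin.reduceFinMk, Fin.zero_eta, Fin.mk_one, SetLike.mem_coe] <;>
        first | exact absurd hij (by decide) | with_reducible exact memB01 | with_reducible exact memB02 | with_reducible exact memB03 | with_reducible exact memB04 | with_reducible exact memB05 | with_reducible exact memB12 | with_reducible exact memB13 | with_reducible exact memB14 | with_reducible exact memB15 | with_reducible exact memB23 | with_reducible exact memB24 | with_reducible exact memB25 | with_reducible exact memB34 | with_reducible exact memB35 | with_reducible exact memB45
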